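/- arXiv:2505.23092 — 2 statements merged into one kernel-verified Lean document; each statement's English description precedes it below -/
import Mathlib

section
/- In any ordered field F, the Mean Value Theorem implies the Least Upper Bound Property: if for all a < b and all f : F → F continuous on [a,b] and differentiable on (a,b) there exists c ∈ (a,b) with f(b) − f(a) = f'(c)(b−a), then every nonempty subset of F bounded above has a least upper bound. -/
/-!
A locally constant function has derivative zero everywhere, so the mean value theorem forces it to
be constant: the field is a preconnected space. On the other hand, if a nonempty set `A` that is
bounded above had no least upper bound, then `upperBounds A` would be a nonempty proper clopen
subset: it is always closed, and it is open because below each upper bound lies a smaller one.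
-/

open Filter Topology

/-- The derivative of `f : F → F` at `a` in the order topology. -/
def HasDerivO {F : Type*} [Field F] [LinearOrder F] [IsStrictOrderedRing F] [TopologicalSpace F]
    (f : F → F) (L a : F) : Prop :=
  Tendsto (fun x => (f x - f a) / (x - a)) (𝓝[≠] a) (𝓝 L)

section UpperBounds

variable {α : Type*} [LinearOrder α] [TopologicalSpace α] {A : Set α}

theorem isClosed_upperBounds [ClosedIciTopology α] (A : Set α) : IsClosed (upperBounds A) := by
  have hinter : upperBounds A = ⋂ a ∈ A, Set.Ici a := by
    ext x
    simp [upperBounds]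
  rw [hinter]
  exact isClosed_biInter fun a _ => isClosed_Ici

theorem isOpen_upperBounds_of_forall_not_isLUB [ClosedIicTopology α] (hA : ∀ s, ¬IsLUB A s) :
    IsOpen (upperBounds A) := by
  refine isOpen_iff_mem_nhds.mpr fun x hx => ?_
  obtain ⟨y, hy, hyx⟩ : ∃ y ∈ upperBounds A, y < x := by
    simpa [IsLUB, IsLeast, hx, lowerBounds] using hA x
  exact mem_of_superset (Ioi_mem_nhds hyx) fun z hz => upperBounds_mono_mem hz.le hy

theorem exists_isLUB_of_preconnectedSpace [OrderClosedTopology α] [PreconnectedSpace α]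
    (hne : A.Nonempty) (hbdd : BddAbove A) : ∃ s, IsLUB A s := by
  by_contra! hA
  obtain ⟨a, ha⟩ := hne
  have hclopen : IsClopen (upperBounds A) :=
    ⟨isClosed_upperBounds A, isOpen_upperBounds_of_forall_not_isLUB hA⟩
  rcases isClopen_iff.mp hclopen with hempty | huniv
  · exact Set.nonempty_iff_ne_empty.mp hbdd hempty
  · exact hA a (IsGreatest.isLUB ⟨ha, huniv ▸ Set.mem_univ a⟩)

end UpperBounds

section MeanValue

variable {F : Type*} [Field F] [LinearOrder F] [IsStrictOrderedRing F] [TopologicalSpace F]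

theorem hasDerivO_zero_of_eventually_eq {f : F → F} {a : F} (h : ∀ᶠ y in 𝓝 a, f y = f a) :
    HasDerivO f 0 a := by
  refine tendsto_const_nhds.congr' ?_
  filter_upwards [nhdsWithin_le_nhds h] with y hy
  rw [hy, sub_self, zero_div]

theorem IsLocallyConstant.hasDerivO_zero {f : F → F} (hf : IsLocallyConstant f) (a : F) :
    HasDerivO f 0 a :=
  hasDerivO_zero_of_eventually_eq (hf.eventually_eq a)

variable (F) in
def MeanValueProperty : Prop :=
  ∀ (f f' : F → F) (a b : F), a < b → ContinuousOn f (Set.Icc a b) →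
    (∀ x ∈ Set.Ioo a b, HasDerivO f (f' x) x) → ∃ c ∈ Set.Ioo a b, f b - f a = f' c * (b - a)

theorem IsLocallyConstant.apply_eq_of_meanValueProperty (hMVT : MeanValueProperty F)
    {f : F → F} (hf : IsLocallyConstant f) (a b : F) : f a = f b := by
  wlog hab : a < b generalizing a b
  · rcases (not_lt.mp hab).lt_or_eq with hba | rfl
    · exact (this b a hba).symm
    · rfl
  obtain ⟨c, -, hc⟩ := hMVT f 0 a b hab hf.continuous.continuousOn fun x _ => hf.hasDerivO_zero x
  rw [Pi.zero_apply, zero_mul, sub_eq_zero] at hc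
  exact hc.symm

theorem preconnectedSpace_of_meanValueProperty (hMVT : MeanValueProperty F) :
    PreconnectedSpace F := by
  refine preconnectedSpace_iff_clopen.mpr fun s hs => ?_
  by_contra! hs'
  obtain ⟨⟨x, hx⟩, hs_ne_univ⟩ := hs'
  obtain ⟨y, hy⟩ := (Set.ne_univ_iff_exists_notMem s).mp hs_ne_univ
  have hxy : s.indicator 1 x = s.indicator (1 : F → F) y :=
    (LocallyConstant.charFn F hs).isLocallyConstant.apply_eq_of_meanValueProperty hMVT x y
  rw [Set.indicator_of_mem hx, Set.indicator_of_notMem hy] at hxy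
  exact one_ne_zero hxy

end MeanValue

/-- In any ordered field, the Mean Value Theorem implies the Least Upper
Bound Property. -/
theorem stmt_4 {F : Type*} [Field F] [LinearOrder F] [IsStrictOrderedRing F] [TopologicalSpace F] [OrderTopology F]
    (hMVT : ∀ (f f' : F → F) (a b : F), a < b → ContinuousOn f (Set.Icc a b) →
      (∀ x ∈ Set.Ioo a b, HasDerivO f (f' x) x) →
      ∃ c ∈ Set.Ioo a b, f b - f a = f' c * (b - a)) :
    ∀ A : Set F, A.Nonempty → BddAbove A → ∃ s, IsLUB A s := by
  have : PreconnectedSpace F := preconnectedSpace_of_meanValueProperty hMVT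
  exact fun A hne hbdd => exists_isLUB_of_preconnectedSpace hne hbdd
end

section
/- Let F be a proper subfield of ℝ (hence an incomplete Archimedean ordered field). Then F fails the Limit of Derivatives Property: there exists f : F → F continuous at 0, differentiable on F \ {0} with f' ≡ 0 there (so lim_{t→0} f'(t) = 0), satisfying (1/2)|t| < |f(t)| < 2|t| for all nonzero t, so that f'(0), if it exists, is nonzero. -/
/-!
A proper subfield `K` of `ℝ` misses a point `c ∈ (1/2, 1)`, hence every `c · 2^m`. So `K ∖ {0}` is
the disjoint union of the open shells `c · 2^m < |t| < c · 2^(m+1)`, each of which contains the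
point `2^m ∈ K`, so the function equal to `2^m` on the `m`-th shell is locally constant away from
`0` and is squeezed between `|t|/2` and `2|t|`. It is therefore continuous at `0` with derivative
`0` elsewhere, while its difference quotients at `0` stay above `1/2`.
-/

open Filter Topology

open Set

theorem hasDerivO_zero_of_eventuallyEq_const {F : Type*} [Field F] [LinearOrder F]
    [IsStrictOrderedRing F] [TopologicalSpace F] {f : F → F} {a : F}
    (h : f =ᶠ[𝓝 a] fun _ => f a) : HasDerivO f 0 a :=
  tendsto_const_nhds.congr' <| (h.filter_mono nhdsWithin_le_nhds).mono fun x hx => by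
    simp only [hx, sub_self, zero_div]

theorem Int.log_eq_of_zpow_le_of_lt_zpow {R : Type*} [Semifield R] [LinearOrder R]
    [IsStrictOrderedRing R] [FloorSemiring R] {b : ℕ} (hb : 1 < b) {m : ℤ} {r : R}
    (h₁ : (b : R) ^ m ≤ r) (h₂ : r < (b : R) ^ (m + 1)) : Int.log b r = m := by
  have hr : 0 < r := (zpow_pos (by exact_mod_cast zero_lt_one.trans hb) m).trans_le h₁
  have := (Int.zpow_le_iff_le_log hb hr).1 h₁
  have := (Int.lt_zpow_iff_log_lt hb hr).1 h₂
  omega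

namespace Subfield

variable {K : Subfield ℝ}

theorem exists_mem_Ioo_notMem (hK : K ≠ ⊤) {a b : ℝ} (hab : a < b) :
    ∃ c ∈ Ioo a b, c ∉ K := by
  obtain ⟨x, hx⟩ : ∃ x, x ∉ K := by
    by_contra! h
    exact hK (eq_top_iff.2 fun x _ => h x)
  obtain ⟨q, hq₁, hq₂⟩ := exists_rat_btwn (sub_lt_sub_right hab x)
  refine ⟨x + q, ⟨by linarith, by linarith⟩, fun hxq => hx ?_⟩
  simpa using K.sub_mem hxq (SubfieldClass.ratCast_mem K q)

theorem mul_two_zpow_notMem {c : ℝ} (hc : c ∉ K) (m : ℤ) : c * 2 ^ m ∉ K := fun h => hc <| by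
  rw [← mul_div_cancel_right₀ c (zpow_ne_zero m two_ne_zero)]
  exact K.div_mem h (zpow_mem (ofNat_mem K 2) m)

instance nhdsNE_neBot (x : K) : (𝓝[≠] x).NeBot := by
  let := NontriviallyNormedField.ofNormNeOne (𝕜 := K)
    ⟨2, two_ne_zero, (abs_two (α := ℝ)).trans_ne (by norm_num)⟩
  exact NormedField.nhdsNE_neBot x

theorem continuousAt_zero_of_abs_le {f : K → K} (C : K) (h : ∀ t, |f t| ≤ C * |t|) :
    ContinuousAt f 0 := by
  have hf0 : f 0 = 0 := abs_nonpos_iff.1 (by simpa using h 0)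
  have hbig : f =O[𝓝 0] id :=
    .of_bound (C : ℝ) (.of_forall fun t => (Subtype.coe_le_coe.2 (h t) : _))
  rw [ContinuousAt, hf0]
  exact hbig.trans_tendsto tendsto_id

theorem not_hasDerivO_zero_zero {f : K → K} {C : K} (hC : 0 < C) (hf0 : f 0 = 0)
    (h : ∀ t ≠ 0, C * |t| ≤ |f t|) : ¬ HasDerivO f 0 0 := by
  intro hderiv
  have small : ∀ᶠ x in 𝓝[≠] 0, ‖(f x - f 0) / (x - 0)‖ < C :=
    (tendsto_zero_iff_norm_tendsto_zero.1 hderiv).eventually (gt_mem_nhds hC)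
  obtain ⟨x, hx, hx0⟩ := (small.and self_mem_nhdsWithin).exists
  have hxpos : (0 : ℝ) < ‖x‖ := norm_pos_iff.2 hx0
  rw [hf0, sub_zero, sub_zero, norm_div, div_lt_iff₀ hxpos] at hx
  exact (Subtype.coe_le_coe.2 (h x hx0)).not_gt hx

end Subfield

section DyadicStep

variable {c : ℝ}

-- The paper's `I_n` is `{t ∈ K | |t| ∈ dyadicShell c (-n)}`, and we take `a_n = 2^(-n)`.
def dyadicShell (c : ℝ) (m : ℤ) : Set ℝ := Ioo (c * 2 ^ m) (c * 2 ^ (m + 1))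

theorem log_div_eq_of_mem_dyadicShell (hc₀ : 0 < c) {x : ℝ} {m : ℤ} (hx : x ∈ dyadicShell c m) :
    Int.log 2 (x / c) = m := by
  refine Int.log_eq_of_zpow_le_of_lt_zpow one_lt_two ?_ ?_ <;> push_cast
  · rw [le_div_iff₀' hc₀]; exact hx.1.le
  · rw [div_lt_iff₀' hc₀]; exact hx.2

variable {K : Subfield ℝ} {t : K}

theorem abs_mem_dyadicShell (hcK : c ∉ K) (hc₀ : 0 < c) (ht : t ≠ 0) :
    |(t : ℝ)| ∈ dyadicShell c (Int.log 2 (|(t : ℝ)| / c)) := by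
  have hpos : 0 < |(t : ℝ)| / c := div_pos (abs_pos.2 (by exact_mod_cast ht)) hc₀
  have hle := Int.zpow_log_le_self one_lt_two hpos
  have hlt := Int.lt_zpow_succ_log_self one_lt_two (|(t : ℝ)| / c)
  push_cast at hle hlt
  rw [le_div_iff₀' hc₀] at hle
  rw [div_lt_iff₀' hc₀] at hlt
  refine ⟨hle.lt_of_ne fun h => K.mul_two_zpow_notMem hcK (Int.log 2 (|(t : ℝ)| / c)) ?_, hlt⟩
  rw [h]
  exact (|t|).2

noncomputable def dyadicStep (K : Subfield ℝ) (c : ℝ) (t : K) : K :=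
  if t = 0 then 0 else 2 ^ Int.log 2 (|(t : ℝ)| / c)

theorem dyadicStep_zero : dyadicStep K c 0 = 0 := if_pos rfl

theorem coe_dyadicStep (ht : t ≠ 0) :
    (dyadicStep K c t : ℝ) = 2 ^ Int.log 2 (|(t : ℝ)| / c) := by
  rw [dyadicStep, if_neg ht]
  rfl

theorem dyadicStep_eventuallyEq (hcK : c ∉ K) (hc₀ : 0 < c) (ht : t ≠ 0) :
    dyadicStep K c =ᶠ[𝓝 t] fun _ => dyadicStep K c t := by
  set m := Int.log 2 (|(t : ℝ)| / c)
  have hopen : IsOpen {y : K | |(y : ℝ)| ∈ dyadicShell c m} :=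
    isOpen_Ioo.preimage continuous_subtype_val.abs
  filter_upwards [hopen.mem_nhds (abs_mem_dyadicShell hcK hc₀ ht)] with y hy
  have hy₀ : y ≠ 0 := by
    rintro rfl
    exact (mul_pos hc₀ (zpow_pos two_pos m)).not_ge (by simpa using hy.1.le)
  rw [dyadicStep, dyadicStep, if_neg hy₀, if_neg ht, log_div_eq_of_mem_dyadicShell hc₀ hy]

theorem dyadicStep_bounds (hcK : c ∉ K) (hc₁ : 1 / 2 < c) (hc₂ : c < 1) (ht : t ≠ 0) :
    (1 / 2 : K) * |t| < |dyadicStep K c t| ∧ |dyadicStep K c t| < 2 * |t| := by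
  obtain ⟨h₁, h₂⟩ := abs_mem_dyadicShell hcK (by linarith) ht
  rw [zpow_add_one₀ two_ne_zero] at h₂
  rw [← Subtype.coe_lt_coe, ← Subtype.coe_lt_coe]
  change (1 / 2 : ℝ) * |(t : ℝ)| < |(dyadicStep K c t : ℝ)| ∧
    |(dyadicStep K c t : ℝ)| < 2 * |(t : ℝ)|
  rw [coe_dyadicStep ht, abs_zpow, abs_two]
  constructor <;> nlinarith

end DyadicStep

/-- every proper subfield of ℝ fails the Limit of Derivatives Property:
there is an `f` continuous at `0`, with derivative `0` at every nonzero point,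
satisfying `(1/2)|t| < |f t| < 2|t|` for all nonzero `t`, so that any derivative of `f`
at `0` is nonzero. -/
theorem stmt_14 (K : Subfield ℝ) (hK : K ≠ ⊤) :
    ∃ f : K → K, ContinuousAt f 0 ∧
      (∀ t : K, t ≠ 0 → HasDerivO f 0 t) ∧
      Tendsto (fun _ : K => (0 : K)) (𝓝[≠] (0 : K)) (𝓝 0) ∧
      (∀ t : K, t ≠ 0 → (1 / 2 : K) * |t| < |f t| ∧ |f t| < 2 * |t|) ∧
      (∀ L : K, HasDerivO f L 0 → L ≠ 0) := by
  obtain ⟨c, ⟨hc₁, hc₂⟩, hcK⟩ := K.exists_mem_Ioo_notMem hK (by norm_num : (1 / 2 : ℝ) < 1)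
  have bounds := fun t (ht : t ≠ 0) => dyadicStep_bounds hcK hc₁ hc₂ ht
  refine ⟨dyadicStep K c, ?_, fun t ht => ?_, tendsto_const_nhds, bounds, fun L hL hL0 => ?_⟩
  · refine K.continuousAt_zero_of_abs_le 2 fun t => ?_
    rcases eq_or_ne t 0 with rfl | ht
    · simp [dyadicStep_zero]
    · exact (bounds t ht).2.le
  · exact hasDerivO_zero_of_eventuallyEq_const (dyadicStep_eventuallyEq hcK (by linarith) ht)
  · exact K.not_hasDerivO_zero_zero (by norm_num) dyadicStep_zero
      (fun t ht => (bounds t ht).1.le) (hL0 ▸ hL)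
end
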